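/- arXiv:1210.1279 — 3 statements merged into one kernel-verified Lean document; each statement's English description precedes it below -/
import Mathlib

section
/- (Frobenius) Let (z_j)_{j≥0} be a sequence in a real normed vector space V. If the Cesàro averages (1/n) ∑_{j=0}^{n-1} z_j converge to z̃ ∈ V, then the power series ∑ λ^j z_j has radius of convergence at least 1 and lim_{λ→1⁻} (1−λ) ∑_{j≥0} λ^j z_j = z̃. -/
open scoped Topology
open Filter

theorem stmt11 {V : Type*} [NormedAddCommGroup V] [NormedSpace ℝ V] [CompleteSpace V]
    (z : ℕ → V) (zt : V)
    (hC : Tendsto (fun n : ℕ => (n : ℝ)⁻¹ • ∑ j ∈ Finset.range n, z j) atTop (𝓝 zt)) :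
    (∀ r : ℝ, |r| < 1 → Summable fun j : ℕ => r ^ j • z j) ∧
    Tendsto (fun lam : ℝ => (1 - lam) • ∑' j : ℕ, lam ^ j • z j) (𝓝[<] (1 : ℝ)) (𝓝 zt) := by
  classical
  set S : ℕ → V := fun n => ∑ j ∈ Finset.range n, z j with hSdef
  set c : ℕ → V := fun n => ((n : ℝ) + 1)⁻¹ • S (n + 1) with hcdef
  have hc : Tendsto c atTop (𝓝 zt) := by
    have h := hC.comp (tendsto_add_atTop_nat 1)
    simpa [hcdef, Function.comp_def, Nat.cast_add, Nat.cast_one] using h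
  have hSc : ∀ n : ℕ, S (n + 1) = ((n : ℝ) + 1) • c n := fun n =>
    (smul_inv_smul₀ (by positivity) _).symm
  obtain ⟨C, hCb⟩ : ∃ C : ℝ, ∀ n, ‖c n‖ ≤ C := by
    obtain ⟨C, hC'⟩ := hc.norm.bddAbove_range
    exact ⟨C, fun n => hC' ⟨n, rfl⟩⟩
  have hC0 : 0 ≤ C := le_trans (norm_nonneg (c 0)) (hCb 0)
  have hSb : ∀ n : ℕ, ‖S n‖ ≤ C * n := by
    intro n
    cases n with
    | zero => simp [hSdef]
    | succ m =>
      have h1 : ‖S (m + 1)‖ = ((m : ℝ) + 1) * ‖c m‖ := by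
        rw [hSc m, norm_smul, Real.norm_eq_abs, abs_of_nonneg (by positivity)]
      rw [h1]
      push_cast
      calc ((m : ℝ) + 1) * ‖c m‖ ≤ ((m : ℝ) + 1) * C := by
            apply mul_le_mul_of_nonneg_left (hCb m) (by positivity)
        _ = C * ((m : ℝ) + 1) := mul_comm _ _
  have hzb : ∀ n : ℕ, ‖z n‖ ≤ 2 * C * ((n : ℝ) + 1) := by
    intro n
    have h1 : z n = S (n + 1) - S n := by simp [hSdef, Finset.sum_range_succ]
    rw [h1]
    have h2 := hSb (n + 1)
    have h3 := hSb n
    push_cast at h2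
    have h4 : (0:ℝ) ≤ (n : ℝ) := Nat.cast_nonneg n
    calc ‖S (n + 1) - S n‖ ≤ ‖S (n + 1)‖ + ‖S n‖ := norm_sub_le _ _
      _ ≤ 2 * C * ((n : ℝ) + 1) := by nlinarith
  have hws : ∀ r : ℝ, |r| < 1 → Summable (fun n : ℕ => ((n : ℝ) + 1) * r ^ n) := by
    intro r hr
    have h1 := summable_pow_mul_geometric_of_norm_lt_one (R := ℝ) 1 (by simpa using hr)
    have h2 : Summable (fun n : ℕ => r ^ n) := summable_geometric_of_norm_lt_one (by simpa using hr)
    have := h1.add h2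
    simpa [add_mul, one_mul, pow_one] using this
  have hsum1 : ∀ r : ℝ, |r| < 1 → Summable fun j : ℕ => r ^ j • z j := by
    intro r hr
    have hg : Summable (fun n : ℕ => (2 * C) * (((n : ℝ) + 1) * |r| ^ n)) :=
      (hws |r| (by rwa [abs_abs])).mul_left _
    refine Summable.of_norm_bounded hg ?_
    intro n
    rw [norm_smul, norm_pow, Real.norm_eq_abs]
    calc |r| ^ n * ‖z n‖ ≤ |r| ^ n * (2 * C * ((n : ℝ) + 1)) := by
          apply mul_le_mul_of_nonneg_left (hzb n) (by positivity)
      _ = 2 * C * (((n : ℝ) + 1) * |r| ^ n) := by ring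
  refine ⟨hsum1, ?_⟩
  have ha : Tendsto (fun n => c n - zt) atTop (𝓝 0) := by
    simpa using hc.sub (tendsto_const_nhds (x := zt))
  rw [Metric.tendsto_nhds]
  intro ε hε
  obtain ⟨N, hN⟩ : ∃ N, ∀ n ≥ N, ‖c n - zt‖ ≤ ε / 2 := by
    obtain ⟨N, hN⟩ := (Metric.tendsto_atTop.1 ha) (ε / 2) (by positivity)
    exact ⟨N, fun n hn => by simpa [dist_eq_norm] using (hN n hn).le⟩
  set B := ∑ n ∈ Finset.range N, ((n : ℝ) + 1) * ‖c n - zt‖ with hBdef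
  have hB0 : 0 ≤ B := Finset.sum_nonneg fun n _ => by positivity
  have hevB : ∀ᶠ l in 𝓝[<] (1 : ℝ), (1 - l) ^ 2 * B < ε / 2 := by
    have hcont : Tendsto (fun l : ℝ => (1 - l) ^ 2 * B) (𝓝 1) (𝓝 ((1 - 1) ^ 2 * B)) := by
      apply Continuous.tendsto; fun_prop
    have h : Tendsto (fun l : ℝ => (1 - l) ^ 2 * B) (𝓝[<] (1 : ℝ)) (𝓝 0) := by
      simpa using hcont.mono_left nhdsWithin_le_nhds
    exact h.eventually_lt_const (by positivity)
  have hmem : Set.Ioo (0 : ℝ) 1 ∈ 𝓝[<] (1 : ℝ) :=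
    Ioo_mem_nhdsLT_of_mem (by constructor <;> norm_num)
  filter_upwards [hevB, hmem] with l hlB hl
  obtain ⟨hl0, hl1⟩ := hl
  have hl0' : (0 : ℝ) ≤ l := hl0.le
  have habs : |l| < 1 := by rw [abs_of_nonneg hl0']; exact hl1
  set w : ℕ → ℝ := fun n => ((n : ℝ) + 1) * l ^ n with hwdef
  have hw0 : ∀ n, 0 ≤ w n := fun n => by positivity
  have hwsum : Summable w := hws l habs
  have hws2 : (1 - l) ^ 2 * ∑' n, w n = 1 := by
    have h1 : ∑' n : ℕ, (n : ℝ) * l ^ n = l / (1 - l) ^ 2 := by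
      simpa using tsum_coe_mul_geometric_of_norm_lt_one (𝕜 := ℝ) (r := l) (by simpa using habs)
    have h2 : ∑' n : ℕ, l ^ n = (1 - l)⁻¹ := tsum_geometric_of_lt_one hl0' hl1
    have hs1 : Summable (fun n : ℕ => (n : ℝ) * l ^ n) := by
      simpa using summable_pow_mul_geometric_of_norm_lt_one (R := ℝ) 1 (by simpa using habs)
    have hs2 : Summable (fun n : ℕ => l ^ n) := summable_geometric_of_norm_lt_one (by simpa using habs)
    have hsum : ∑' n, w n = l / (1 - l) ^ 2 + (1 - l)⁻¹ := by
      rw [hwdef]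
      rw [show (fun n : ℕ => ((n : ℝ) + 1) * l ^ n) = fun n : ℕ => (n : ℝ) * l ^ n + l ^ n by
        funext n; ring]
      rw [Summable.tsum_add hs1 hs2, h1, h2]
    rw [hsum]
    have hne : (1 : ℝ) - l ≠ 0 := ne_of_gt (by linarith)
    field_simp
    ring
  have hfs : Summable (fun n : ℕ => w n • c n) := by
    refine Summable.of_norm_bounded (hwsum.mul_left C) ?_
    intro n
    rw [norm_smul, Real.norm_eq_abs, abs_of_nonneg (hw0 n)]
    calc w n * ‖c n‖ ≤ w n * C := mul_le_mul_of_nonneg_left (hCb n) (hw0 n)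
      _ = C * w n := mul_comm _ _
  have hzsum : Summable (fun j : ℕ => l ^ j • z j) := hsum1 l habs
  have hkey : ∑' j : ℕ, l ^ j • z j = (1 - l) • ∑' n, w n • c n := by
    set f : ℕ → V := fun n => w n • c n with hfdef
    have hf0 : f 0 = z 0 := by
      simp [hfdef, hwdef, hcdef, hSdef, Finset.sum_range_one]
    have hfn : ∀ n, f n = l ^ n • S (n + 1) := by
      intro n
      have hne : ((n : ℝ) + 1) ≠ 0 := by positivity
      have hmul : w n * ((n : ℝ) + 1)⁻¹ = l ^ n := by
        simp only [hwdef]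
        rw [mul_comm ((n : ℝ) + 1) (l ^ n), mul_assoc, mul_inv_cancel₀ hne, mul_one]
      calc f n = w n • (((n : ℝ) + 1)⁻¹ • S (n + 1)) := rfl
        _ = (w n * ((n : ℝ) + 1)⁻¹) • S (n + 1) := smul_smul _ _ _
        _ = l ^ n • S (n + 1) := by rw [hmul]
    have hstep : ∀ n : ℕ, l ^ (n + 1) • z (n + 1) = f (n + 1) - l • f n := by
      intro n
      rw [hfn, hfn, smul_smul, ← pow_succ', ← smul_sub]
      congr 1
      simp [hSdef, Finset.sum_range_succ]
    have hfs1 : Summable (fun n => f (n + 1)) := (summable_nat_add_iff 1).2 hfs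
    have hfl : Summable (fun n => l • f n) := hfs.const_smul l
    calc ∑' j : ℕ, l ^ j • z j = z 0 + ∑' n : ℕ, l ^ (n + 1) • z (n + 1) := by
          simpa using Summable.tsum_eq_zero_add hzsum
      _ = f 0 + ∑' n : ℕ, (f (n + 1) - l • f n) := by
          rw [hf0]; exact congrArg _ (tsum_congr hstep)
      _ = f 0 + (∑' n : ℕ, f (n + 1) - ∑' n : ℕ, l • f n) := by rw [Summable.tsum_sub hfs1 hfl]
      _ = (f 0 + ∑' n : ℕ, f (n + 1)) - l • ∑' n, f n := by
          rw [Summable.tsum_const_smul l hfs]; abel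
      _ = ∑' n, f n - l • ∑' n, f n := by rw [← Summable.tsum_eq_zero_add hfs]
      _ = (1 - l) • ∑' n, f n := by rw [sub_smul, one_smul]
  have hwz : Summable (fun n => w n • zt) := hwsum.smul_const zt
  have hmain : (1 - l) • ∑' j : ℕ, l ^ j • z j - zt
      = ((1 - l) ^ 2) • ∑' n, w n • (c n - zt) := by
    have hz' : zt = ((1 - l) ^ 2) • ∑' n, w n • zt := by
      rw [Summable.tsum_smul_const hwsum, smul_smul, hws2, one_smul]
    calc (1 - l) • ∑' j : ℕ, l ^ j • z j - zt
        = ((1 - l) ^ 2) • ∑' n, w n • c n - ((1 - l) ^ 2) • ∑' n, w n • zt := by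
          rw [hkey, smul_smul, ← sq, ← hz']
      _ = ((1 - l) ^ 2) • (∑' n, w n • c n - ∑' n, w n • zt) := (smul_sub _ _ _).symm
      _ = ((1 - l) ^ 2) • ∑' n, (w n • c n - w n • zt) := by rw [Summable.tsum_sub hfs hwz]
      _ = ((1 - l) ^ 2) • ∑' n, w n • (c n - zt) := by
          congr 1; exact tsum_congr fun n => (smul_sub _ _ _).symm
  set g : ℕ → ℝ := fun n => (if n < N then w n * ‖c n - zt‖ else 0) + w n * (ε / 2) with hgdef
  have hgsum1 : Summable (fun n : ℕ => if n < N then w n * ‖c n - zt‖ else 0) := by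
    apply summable_of_ne_finset_zero (s := Finset.range N)
    intro n hn
    rw [Finset.mem_range] at hn
    simp [hn]
  have hgsum2 : Summable (fun n : ℕ => w n * (ε / 2)) := hwsum.mul_right _
  have hgs : Summable g := hgsum1.add hgsum2
  have hnb : ∀ n, ‖w n • (c n - zt)‖ ≤ g n := by
    intro n
    rw [norm_smul, Real.norm_eq_abs, abs_of_nonneg (hw0 n)]
    simp only [hgdef]
    by_cases hn : n < N
    · rw [if_pos hn]
      have : 0 ≤ w n * (ε / 2) := mul_nonneg (hw0 n) (by positivity)
      linarith
    · rw [if_neg hn, zero_add]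
      exact mul_le_mul_of_nonneg_left (hN n (le_of_not_gt hn)) (hw0 n)
  have hnsum : Summable (fun n => ‖w n • (c n - zt)‖) :=
    Summable.of_nonneg_of_le (fun n => norm_nonneg _) hnb hgs
  have h1 : ‖∑' n, w n • (c n - zt)‖ ≤ ∑' n, g n :=
    (norm_tsum_le_tsum_norm hnsum).trans (Summable.tsum_le_tsum hnb hnsum hgs)
  have h2 : ∑' n, g n = (∑ n ∈ Finset.range N, w n * ‖c n - zt‖) + (ε / 2) * ∑' n, w n := by
    rw [hgdef, Summable.tsum_add hgsum1 hgsum2]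
    congr 1
    · rw [tsum_eq_sum (s := Finset.range N) (fun n hn => by
        rw [Finset.mem_range] at hn; simp [hn])]
      exact Finset.sum_congr rfl fun n hn => if_pos (Finset.mem_range.1 hn)
    · rw [tsum_mul_right, mul_comm]
  have h3 : ∑ n ∈ Finset.range N, w n * ‖c n - zt‖ ≤ B := by
    apply Finset.sum_le_sum
    intro n _
    apply mul_le_mul_of_nonneg_right _ (norm_nonneg _)
    calc w n = ((n : ℝ) + 1) * l ^ n := rfl
      _ ≤ ((n : ℝ) + 1) * 1 := by
          apply mul_le_mul_of_nonneg_left (pow_le_one₀ hl0' hl1.le) (by positivity)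
      _ = (n : ℝ) + 1 := mul_one _
  rw [dist_eq_norm, hmain]
  calc ‖((1 - l) ^ 2) • ∑' n, w n • (c n - zt)‖
      = (1 - l) ^ 2 * ‖∑' n, w n • (c n - zt)‖ := by
        rw [norm_smul, Real.norm_eq_abs, abs_of_nonneg (by positivity)]
    _ ≤ (1 - l) ^ 2 * ((∑ n ∈ Finset.range N, w n * ‖c n - zt‖) + (ε / 2) * ∑' n, w n) := by
        apply mul_le_mul_of_nonneg_left _ (by positivity)
        exact h1.trans (le_of_eq h2)
    _ = (1 - l) ^ 2 * (∑ n ∈ Finset.range N, w n * ‖c n - zt‖)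
        + (ε / 2) * ((1 - l) ^ 2 * ∑' n, w n) := by ring
    _ = (1 - l) ^ 2 * (∑ n ∈ Finset.range N, w n * ‖c n - zt‖) + ε / 2 := by
        rw [hws2, mul_one]
    _ ≤ (1 - l) ^ 2 * B + ε / 2 := by
        have := mul_le_mul_of_nonneg_left h3 (by positivity : (0:ℝ) ≤ (1 - l) ^ 2)
        linarith
    _ < ε / 2 + ε / 2 := by linarith
    _ = ε := by ring
end

section
/- Let (a_n) be a sequence in a real normed space with partial sums s_n = a_0 + ⋯ + a_n and Cesàro means σ_n = (s_0 + ⋯ + s_{n-1})/n. If σ_n → A, then ∑ λ^n a_n converges for λ ∈ (0,1) and lim_{λ→1⁻} ∑_{n≥0} λ^n a_n = A. -/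
open scoped Topology
open Filter

set_option maxHeartbeats 1000000

private lemma abel_partial {V : Type*} [AddCommGroup V] [Module ℝ V]
    (f g : ℕ → V) (h0 : g 0 = f 0) (h : ∀ n, g (n + 1) = f (n + 1) - f n) (lam : ℝ) :
    ∀ N, ∑ n ∈ Finset.range (N + 1), lam ^ n • g n
      = (1 - lam) • ∑ n ∈ Finset.range N, lam ^ n • f n + lam ^ N • f N := by
  intro N
  induction N with
  | zero => simp [h0]
  | succ N ih =>
      rw [Finset.sum_range_succ, ih, h, Finset.sum_range_succ, pow_succ]
      module

private lemma abel_tsum {V : Type*} [NormedAddCommGroup V] [NormedSpace ℝ V]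
    (f g : ℕ → V) (h0 : g 0 = f 0) (h : ∀ n, g (n + 1) = f (n + 1) - f n) (lam : ℝ)
    (hf : Summable fun n : ℕ => lam ^ n • f n) (hg : Summable fun n : ℕ => lam ^ n • g n) :
    ∑' n : ℕ, lam ^ n • g n = (1 - lam) • ∑' n : ℕ, lam ^ n • f n := by
  have h1 : Tendsto (fun N : ℕ => ∑ n ∈ Finset.range (N + 1), lam ^ n • g n) atTop
      (𝓝 (∑' n : ℕ, lam ^ n • g n)) :=
    (hg.hasSum.tendsto_sum_nat).comp (tendsto_add_atTop_nat 1)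
  have h2 : Tendsto (fun N : ℕ => (1 - lam) • ∑ n ∈ Finset.range N, lam ^ n • f n
      + lam ^ N • f N) atTop (𝓝 ((1 - lam) • ∑' n : ℕ, lam ^ n • f n + 0)) :=
    ((hf.hasSum.tendsto_sum_nat).const_smul _).add hf.tendsto_atTop_zero
  rw [add_zero] at h2
  exact tendsto_nhds_unique ((funext (abel_partial f g h0 h lam)) ▸ h1) h2

private lemma summable_linear_growth {V : Type*} [NormedAddCommGroup V] [NormedSpace ℝ V]
    [CompleteSpace V] (f : ℕ → V) (C : ℝ) (hf : ∀ n : ℕ, ‖f n‖ ≤ C * ((n : ℝ) + 1))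
    {lam : ℝ} (h0 : 0 < lam) (h1 : lam < 1) :
    Summable fun n : ℕ => lam ^ n • f n := by
  have hlam : ‖lam‖ < 1 := by rw [Real.norm_eq_abs, abs_of_pos h0]; exact h1
  have hsum : Summable fun n : ℕ => C * (((n : ℝ) + 1) * lam ^ n) := by
    apply Summable.mul_left
    have := (summable_pow_mul_geometric_of_norm_lt_one 1 hlam).add
      (summable_geometric_of_norm_lt_one hlam)
    simpa [add_mul, pow_one] using this
  apply Summable.of_norm_bounded hsum
  intro n
  rw [norm_smul, norm_pow, Real.norm_eq_abs, abs_of_pos h0]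
  calc lam ^ n * ‖f n‖ ≤ lam ^ n * (C * ((n : ℝ) + 1)) :=
        mul_le_mul_of_nonneg_left (hf n) (pow_nonneg h0.le n)
    _ = C * (((n : ℝ) + 1) * lam ^ n) := by ring

private lemma hasSum_succ_mul_geometric {lam : ℝ} (h0 : 0 < lam) (h1 : lam < 1) :
    HasSum (fun n : ℕ => ((n : ℝ) + 1) * lam ^ n) (((1 - lam) ^ 2)⁻¹) := by
  have hlam : ‖lam‖ < 1 := by rw [Real.norm_eq_abs, abs_of_pos h0]; exact h1
  have hA := hasSum_coe_mul_geometric_of_norm_lt_one hlam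
  have hB := hasSum_geometric_of_norm_lt_one hlam
  have hne : (1 : ℝ) - lam ≠ 0 := by linarith
  have h := hA.add hB
  convert h using 1
  · rfl
  · funext n; ring
  · field_simp
    ring

theorem stmt12 {V : Type*} [NormedAddCommGroup V] [NormedSpace ℝ V] [CompleteSpace V]
    (a : ℕ → V) (A : V)
    (s : ℕ → V) (hs : ∀ n, s n = ∑ k ∈ Finset.range (n + 1), a k)
    (hσ : Tendsto (fun n : ℕ => (n : ℝ)⁻¹ • ∑ k ∈ Finset.range n, s k) atTop (𝓝 A)) :
    (∀ lam ∈ Set.Ioo (0 : ℝ) 1, Summable fun n : ℕ => lam ^ n • a n) ∧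
    Tendsto (fun lam : ℝ => ∑' n : ℕ, lam ^ n • a n) (𝓝[<] (1 : ℝ)) (𝓝 A) := by
  set T : ℕ → V := fun n => ∑ k ∈ Finset.range (n + 1), s k with hT
  set b : ℕ → V := fun n => ((n : ℝ) + 1)⁻¹ • T n with hb
  -- b n → A
  have hbA : Tendsto b atTop (𝓝 A) := by
    have h := hσ.comp (tendsto_add_atTop_nat 1)
    apply h.congr
    intro n
    simp only [Function.comp, hb, hT]
    push_cast
    rfl
  -- linear growth bounds
  obtain ⟨C, hC⟩ : ∃ C : ℝ, ∀ n, ‖b n‖ ≤ C := by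
    obtain ⟨C, hC⟩ := hbA.norm.bddAbove_range
    exact ⟨C, fun n => hC ⟨n, rfl⟩⟩
  have hC0 : 0 ≤ C := le_trans (norm_nonneg _) (hC 0)
  have hTb : ∀ n : ℕ, T n = ((n : ℝ) + 1) • b n := by
    intro n
    rw [hb]
    simp only
    rw [smul_smul, mul_inv_cancel₀ (by positivity), one_smul]
  have hTbound : ∀ n : ℕ, ‖T n‖ ≤ C * ((n : ℝ) + 1) := by
    intro n
    rw [hTb n, norm_smul, Real.norm_eq_abs, abs_of_pos (by positivity)]
    calc ((n : ℝ) + 1) * ‖b n‖ ≤ ((n : ℝ) + 1) * C :=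
          mul_le_mul_of_nonneg_left (hC n) (by positivity)
      _ = C * ((n : ℝ) + 1) := by ring
  have hsT : ∀ n, s (n + 1) = T (n + 1) - T n := by
    intro n; rw [hT]; simp [Finset.sum_range_succ]
  have hsbound : ∀ n : ℕ, ‖s n‖ ≤ 2 * C * ((n : ℝ) + 1) := by
    intro n
    cases n with
    | zero =>
        have h0 : s 0 = T 0 := by simp [hT]
        have := hTbound 0
        rw [h0]
        push_cast at this ⊢
        linarith
    | succ n =>
        have h1 := hTbound (n + 1)
        have h2 := hTbound n
        have h3 := norm_sub_le (T (n + 1)) (T n)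
        rw [hsT n]
        push_cast at h1 ⊢
        nlinarith [Nat.cast_nonneg (α := ℝ) n]
  have has : ∀ n, a (n + 1) = s (n + 1) - s n := by
    intro n
    have h := hs (n + 1)
    rw [Finset.sum_range_succ, ← hs n] at h
    rw [h]; abel
  have ha0 : a 0 = s 0 := by have := hs 0; simpa using this.symm
  have hs0 : s 0 = T 0 := by simp [hT]
  have habound : ∀ n : ℕ, ‖a n‖ ≤ 4 * C * ((n : ℝ) + 1) := by
    intro n
    cases n with
    | zero =>
        have := hsbound 0
        rw [ha0]
        push_cast at this ⊢
        linarith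
    | succ n =>
        have h1 := hsbound (n + 1)
        have h2 := hsbound n
        have h3 := norm_sub_le (s (n + 1)) (s n)
        rw [has n]
        push_cast at h1 ⊢
        nlinarith [Nat.cast_nonneg (α := ℝ) n]
  have hsummA : ∀ lam ∈ Set.Ioo (0 : ℝ) 1, Summable fun n : ℕ => lam ^ n • a n :=
    fun lam hlam => summable_linear_growth a (4 * C) habound hlam.1 hlam.2
  refine ⟨hsummA, ?_⟩
  -- key identity
  have hkey : ∀ lam ∈ Set.Ioo (0 : ℝ) 1,
      (∑' n : ℕ, lam ^ n • a n) - A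
        = ((1 - lam) ^ 2) • ∑' n : ℕ, (((n : ℝ) + 1) * lam ^ n) • (b n - A) := by
    intro lam hlam
    obtain ⟨hl0, hl1⟩ := hlam
    have hsummS : Summable fun n : ℕ => lam ^ n • s n :=
      summable_linear_growth s (2 * C) hsbound hl0 hl1
    have hsummT : Summable fun n : ℕ => lam ^ n • T n :=
      summable_linear_growth T C hTbound hl0 hl1
    have e1 : ∑' n : ℕ, lam ^ n • a n = (1 - lam) • ∑' n : ℕ, lam ^ n • s n :=
      abel_tsum s a ha0 has lam hsummS (hsummA lam ⟨hl0, hl1⟩)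
    have e2 : ∑' n : ℕ, lam ^ n • s n = (1 - lam) • ∑' n : ℕ, lam ^ n • T n :=
      abel_tsum T s hs0 hsT lam hsummT hsummS
    have hgeo := hasSum_succ_mul_geometric hl0 hl1
    have hsummTA : Summable fun n : ℕ => (((n : ℝ) + 1) * lam ^ n) • A :=
      hgeo.summable.smul_const A
    have hTlam : ∀ n : ℕ, lam ^ n • T n = (((n : ℝ) + 1) * lam ^ n) • b n := by
      intro n
      show lam ^ n • T n = (((n : ℝ) + 1) * lam ^ n) • (((n : ℝ) + 1)⁻¹ • T n)
      rw [smul_smul]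
      congr 1
      field_simp
    have hA' : A = ((1 - lam) ^ 2) • ∑' n : ℕ, (((n : ℝ) + 1) * lam ^ n) • A := by
      rw [Summable.tsum_smul_const hgeo.summable, hgeo.tsum_eq, smul_smul,
        mul_inv_cancel₀ (by nlinarith), one_smul]
    have hsummTb : Summable fun n : ℕ => (((n : ℝ) + 1) * lam ^ n) • b n := by
      have h := hsummT; simp_rw [hTlam] at h; exact h
    rw [e1, e2, smul_smul, ← pow_two]
    nth_rewrite 1 [hA']
    rw [← smul_sub]
    congr 1
    simp_rw [hTlam]
    rw [← Summable.tsum_sub hsummTb hsummTA]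
    exact tsum_congr fun n => (smul_sub _ _ _).symm
  -- the limit
  have hba : Tendsto (fun n => ‖b n - A‖) atTop (𝓝 0) := by
    have h := tendsto_sub_nhds_zero_iff.mpr hbA
    simpa using h.norm
  rw [Metric.tendsto_nhdsWithin_nhds]
  intro ε hε
  obtain ⟨N, hN⟩ := (Metric.tendsto_atTop.mp hba) (ε / 4) (by positivity)
  have hNle : ∀ m : ℕ, N ≤ m → ‖b m - A‖ ≤ ε / 4 := by
    intro m hm
    have := hN m hm
    rw [Real.dist_eq, sub_zero, abs_of_nonneg (norm_nonneg _)] at this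
    linarith
  set M : ℝ := ∑ n ∈ Finset.range N, ((n : ℝ) + 1) * ‖b n - A‖ with hM
  have hM0 : 0 ≤ M := Finset.sum_nonneg fun n _ => by positivity
  have hM1 : (0 : ℝ) < M + 1 := by linarith
  refine ⟨min 1 (Real.sqrt (ε / (2 * (M + 1)))), lt_min one_pos (Real.sqrt_pos.mpr (by positivity)), ?_⟩
  intro lam hlamIio hdist
  have hl1 : lam < 1 := hlamIio
  rw [Real.dist_eq, abs_of_neg (by linarith)] at hdist
  have hd1 : 1 - lam < min 1 (Real.sqrt (ε / (2 * (M + 1)))) := by linarith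
  have hl0 : 0 < lam := by
    have := lt_of_lt_of_le hd1 (min_le_left _ _); linarith
  have hsq : (1 - lam) ^ 2 < ε / (2 * (M + 1)) := by
    have hle : 1 - lam < Real.sqrt (ε / (2 * (M + 1))) :=
      lt_of_lt_of_le hd1 (min_le_right _ _)
    calc (1 - lam) ^ 2 < Real.sqrt (ε / (2 * (M + 1))) ^ 2 :=
          pow_lt_pow_left₀ hle (by linarith) two_ne_zero
      _ = ε / (2 * (M + 1)) := Real.sq_sqrt (by positivity)
  -- notation
  set v : ℕ → ℝ := fun n => ((n : ℝ) + 1) * lam ^ n with hv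
  set u : ℕ → ℝ := fun n => ((n : ℝ) + 1) * lam ^ n * ‖b n - A‖ with hu
  have hv0 : ∀ n, 0 ≤ v n := fun n => by positivity
  have hu0 : ∀ n, 0 ≤ u n := fun n => by positivity
  have hgeo := hasSum_succ_mul_geometric hl0 hl1
  have hbound : ∀ n, ‖b n - A‖ ≤ C + ‖A‖ := fun n =>
    le_trans (norm_sub_le _ _) (add_le_add_left (hC n) _)
  have hsummu : Summable u := by
    apply Summable.of_nonneg_of_le hu0 (fun n => ?_) (hgeo.summable.mul_right (C + ‖A‖))
    calc u n ≤ ((n : ℝ) + 1) * lam ^ n * (C + ‖A‖) :=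
          mul_le_mul_of_nonneg_left (hbound n) (hv0 n)
      _ = v n * (C + ‖A‖) := rfl
  have hnorm : ‖∑' n : ℕ, (v n) • (b n - A)‖ ≤ ∑' n, u n := by
    have heq : (fun n : ℕ => ‖(v n) • (b n - A)‖) = u := by
      funext n
      rw [norm_smul, Real.norm_eq_abs, abs_of_nonneg (hv0 n)]
    apply le_trans (norm_tsum_le_tsum_norm ?_)
    · rw [heq]
    · rw [heq]; exact hsummu
  have hsplit : ∑' n, u n = (∑ n ∈ Finset.range N, u n) + ∑' n : ℕ, u (n + N) :=
    (Summable.sum_add_tsum_nat_add N hsummu).symm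
  have hpart1 : ∑ n ∈ Finset.range N, u n ≤ M := by
    apply Finset.sum_le_sum
    intro n _
    have : lam ^ n ≤ 1 := pow_le_one₀ hl0.le hl1.le
    calc u n = ((n : ℝ) + 1) * lam ^ n * ‖b n - A‖ := rfl
      _ ≤ ((n : ℝ) + 1) * 1 * ‖b n - A‖ := by
          apply mul_le_mul_of_nonneg_right _ (norm_nonneg _)
          exact mul_le_mul_of_nonneg_left this (by positivity)
      _ = ((n : ℝ) + 1) * ‖b n - A‖ := by ring
  have hsummv' : Summable fun n : ℕ => v (n + N) := (summable_nat_add_iff N).mpr hgeo.summable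
  have hsummu' : Summable fun n : ℕ => u (n + N) := (summable_nat_add_iff N).mpr hsummu
  have hpart2 : ∑' n : ℕ, u (n + N) ≤ (ε / 4) * ((1 - lam) ^ 2)⁻¹ := by
    have step1 : ∑' n : ℕ, u (n + N) ≤ ∑' n : ℕ, v (n + N) * (ε / 4) := by
      apply Summable.tsum_le_tsum _ hsummu' (hsummv'.mul_right _)
      intro n
      exact mul_le_mul_of_nonneg_left (hNle (n + N) (Nat.le_add_left _ _)) (hv0 _)
    have step2 : ∑' n : ℕ, v (n + N) ≤ ((1 - lam) ^ 2)⁻¹ := by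
      have h := Summable.sum_add_tsum_nat_add N hgeo.summable
      rw [hgeo.tsum_eq] at h
      have hpos : 0 ≤ ∑ n ∈ Finset.range N, v n := Finset.sum_nonneg fun n _ => hv0 n
      linarith
    calc ∑' n : ℕ, u (n + N) ≤ ∑' n : ℕ, v (n + N) * (ε / 4) := step1
      _ = (∑' n : ℕ, v (n + N)) * (ε / 4) := tsum_mul_right
      _ ≤ ((1 - lam) ^ 2)⁻¹ * (ε / 4) :=
          mul_le_mul_of_nonneg_right step2 (by positivity)
      _ = (ε / 4) * ((1 - lam) ^ 2)⁻¹ := by ring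
  -- combine
  have hkey' := hkey lam ⟨hl0, hl1⟩
  rw [dist_eq_norm, hkey', norm_smul, Real.norm_eq_abs, abs_of_nonneg (by positivity : (0:ℝ) ≤ (1 - lam) ^ 2)]
  have hS : ‖∑' n : ℕ, (((n : ℝ) + 1) * lam ^ n) • (b n - A)‖ ≤ M + (ε / 4) * ((1 - lam) ^ 2)⁻¹ := by
    calc ‖∑' n : ℕ, (((n : ℝ) + 1) * lam ^ n) • (b n - A)‖ ≤ ∑' n, u n := hnorm
      _ = (∑ n ∈ Finset.range N, u n) + ∑' n : ℕ, u (n + N) := hsplit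
      _ ≤ M + (ε / 4) * ((1 - lam) ^ 2)⁻¹ := add_le_add hpart1 hpart2
  have hne : ((1 : ℝ) - lam) ^ 2 ≠ 0 := ne_of_gt (by nlinarith)
  calc (1 - lam) ^ 2 * ‖∑' n : ℕ, (((n : ℝ) + 1) * lam ^ n) • (b n - A)‖
      ≤ (1 - lam) ^ 2 * (M + (ε / 4) * ((1 - lam) ^ 2)⁻¹) :=
        mul_le_mul_of_nonneg_left hS (by positivity)
    _ = (1 - lam) ^ 2 * M + ε / 4 := by rw [mul_add, mul_left_comm, mul_inv_cancel₀ hne, mul_one]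
    _ < ε := by
        have : (1 - lam) ^ 2 * M ≤ ε / (2 * (M + 1)) * M :=
          mul_le_mul_of_nonneg_right hsq.le hM0
        have h2 : ε / (2 * (M + 1)) * M < ε / 2 := by
          have hM2 : M / (M + 1) < 1 := (div_lt_one hM1).mpr (by linarith)
          have heq2 : ε / (2 * (M + 1)) * M = ε / 2 * (M / (M + 1)) := by
            field_simp
          rw [heq2]
          calc ε / 2 * (M / (M + 1)) < ε / 2 * 1 :=
                mul_lt_mul_of_pos_left hM2 (by positivity)
            _ = ε / 2 := mul_one _
        linarith
end

section
/- Let u* be a bounded solution of the twisted cohomological equation u(Tx) − Ψ(x)u(x) = ρ(x), and u_λ the unique continuous solution of λu(Tx) − Ψ(x)u(x) = ρ(x). Then u_λ(x) = u*(x) − (1−λ) ∑_{j≥0} λ^j Ψ(x)⁻¹⋯Ψ(T^j x)⁻¹ u*(T^{j+1} x) for all x where u* solves the equation. Consequently, u_λ converges (uniformly / pointwise / a.e.) as λ → 1⁻ if and only if there exists a bounded solution u* with exponential zero mean (i.e., (1−λ)∑_{j≥0} λ^j Ψ(x)⁻¹⋯Ψ(T^j x)⁻¹ u*(T^{j+1}x)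 → 0 as λ → 1⁻ in the corresponding sense), and in that case the limit of u_λ is such a solution. -/
open scoped Topology
open Filter Matrix MeasureTheory

noncomputable section

abbrev UG (l : ℕ) := Matrix.orthogonalGroup (Fin l) ℝ

def act {l : ℕ} (M : UG l) (v : EuclideanSpace ℝ (Fin l)) : EuclideanSpace ℝ (Fin l) :=
  WithLp.toLp 2 ((M : Matrix (Fin l) (Fin l) ℝ).mulVec v)

def invProd {l : ℕ} {X : Type*} (T : X → X) (Ψ : X → UG l) (x : X) (j : ℕ) : UG l :=
  (((List.range (j + 1)).map (fun k => (Ψ (T^[k] x))⁻¹)).prod)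

def fwdProd {l : ℕ} {X : Type*} (T : X → X) (F : X → UG l) (x : X) (j : ℕ) : UG l :=
  (((List.range j).map (fun k => F (T^[k] x))).prod)

def uLam {l : ℕ} {X : Type*} (T : X → X) (Ψ : X → UG l) (ρ : X → EuclideanSpace ℝ (Fin l))
    (lam : ℝ) (x : X) : EuclideanSpace ℝ (Fin l) :=
  -∑' j : ℕ, lam ^ j • act (invProd T Ψ x j) (ρ (T^[j] x))

/-- The exponential averaging operator 𝒮_λ(f,x). -/
def Sop {l : ℕ} {X : Type*} (T : X → X) (Ψ : X → UG l)
    (lam : ℝ) (f : X → EuclideanSpace ℝ (Fin l)) (x : X) : EuclideanSpace ℝ (Fin l) :=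
  (1 - lam) • ∑' j : ℕ, lam ^ j • act (invProd T Ψ x j) (f (T^[j + 1] x))

/-! ### Auxiliary lemmas -/

def actCLM {l : ℕ} (M : UG l) :
    EuclideanSpace ℝ (Fin l) →L[ℝ] EuclideanSpace ℝ (Fin l) :=
  LinearMap.toContinuousLinearMap (Matrix.toEuclideanLin (M : Matrix (Fin l) (Fin l) ℝ))

lemma actCLM_eq {l : ℕ} (M : UG l) (v : EuclideanSpace ℝ (Fin l)) : actCLM M v = act M v := rfl

lemma act_norm {l : ℕ} (M : UG l) (v : EuclideanSpace ℝ (Fin l)) : ‖act M v‖ = ‖v‖ := by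
  have h : star (M : Matrix (Fin l) (Fin l) ℝ) * M = 1 :=
    (Matrix.mem_orthogonalGroup_iff' _ _).mp M.2
  have h2 : ∀ w : EuclideanSpace ℝ (Fin l), ‖w‖^2 = w ⬝ᵥ w := by
    intro w
    rw [@norm_sq_eq_re_inner ℝ]
    simp [inner, dotProduct]
  have key : ((M : Matrix (Fin l) (Fin l) ℝ) *ᵥ v) ⬝ᵥ ((M : Matrix (Fin l) (Fin l) ℝ) *ᵥ v)
      = v ⬝ᵥ v := by
    rw [Matrix.dotProduct_mulVec, ← Matrix.mulVec_transpose, Matrix.mulVec_mulVec]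
    have : ((M : Matrix (Fin l) (Fin l) ℝ)ᵀ) = star (M : Matrix (Fin l) (Fin l) ℝ) := rfl
    rw [this, h, Matrix.one_mulVec]
  have := h2 (act M v)
  rw [show (act M v) ⬝ᵥ (act M v)
      = ((M : Matrix (Fin l) (Fin l) ℝ) *ᵥ v) ⬝ᵥ ((M : Matrix (Fin l) (Fin l) ℝ) *ᵥ v) from rfl,
    key, ← h2] at this
  nlinarith [norm_nonneg v, norm_nonneg (act M v)]

lemma act_one {l : ℕ} (v : EuclideanSpace ℝ (Fin l)) : act 1 v = v := by
  simp [act]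

lemma act_mul {l : ℕ} (M N : UG l) (v : EuclideanSpace ℝ (Fin l)) :
    act (M * N) v = act M (act N v) := by
  simp [act, Matrix.mulVec_mulVec]

lemma act_sub {l : ℕ} (M : UG l) (v w : EuclideanSpace ℝ (Fin l)) :
    act M (v - w) = act M v - act M w := by
  ext i
  simp [act, Matrix.mulVec, dotProduct, PiLp.sub_apply, mul_sub, Finset.sum_sub_distrib]

lemma act_smul {l : ℕ} (M : UG l) (a : ℝ) (v : EuclideanSpace ℝ (Fin l)) :
    act M (a • v) = a • act M v := by
  ext i
  simp [act, Matrix.mulVec, dotProduct, PiLp.smul_apply, Finset.mul_sum, mul_left_comm]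

lemma act_neg {l : ℕ} (M : UG l) (v : EuclideanSpace ℝ (Fin l)) :
    act M (-v) = - act M v := by
  have := act_sub M 0 v
  simpa [act, Matrix.mulVec_zero] using this

lemma invProd_zero {l : ℕ} {X : Type*} (T : X → X) (Ψ : X → UG l) (x : X) :
    invProd T Ψ x 0 = (Ψ x)⁻¹ := by simp [invProd, List.range_succ]

lemma invProd_succ {l : ℕ} {X : Type*} (T : X → X) (Ψ : X → UG l) (x : X) (j : ℕ) :
    invProd T Ψ x (j + 1) = invProd T Ψ x j * (Ψ (T^[j+1] x))⁻¹ := by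
  simp [invProd, List.range_succ, mul_assoc]

lemma invProd_succ' {l : ℕ} {X : Type*} (T : X → X) (Ψ : X → UG l) (x : X) (j : ℕ) :
    invProd T Ψ x (j + 1) = (Ψ x)⁻¹ * invProd T Ψ (T x) j := by
  induction j with
  | zero => simp [invProd_succ, invProd_zero, Function.iterate_one, Function.iterate_succ_apply]
  | succ n ih =>
      rw [invProd_succ, ih, mul_assoc, Function.iterate_succ_apply T (n+1) x, ← invProd_succ]

lemma invProd_mul_Psi {l : ℕ} {X : Type*} (T : X → X) (Ψ : X → UG l) (x : X) (j : ℕ) :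
    invProd T Ψ x (j+1) * Ψ (T^[j+1] x) = invProd T Ψ x j := by
  rw [invProd_succ]
  group

lemma invProd_zero_mul {l : ℕ} {X : Type*} (T : X → X) (Ψ : X → UG l) (x : X) :
    invProd T Ψ x 0 * Ψ x = 1 := by rw [invProd_zero]; group

lemma Psi_mul_invProd {l : ℕ} {X : Type*} (T : X → X) (Ψ : X → UG l) (x : X) (j : ℕ) :
    Ψ x * invProd T Ψ x (j+1) = invProd T Ψ (T x) j := by
  rw [invProd_succ']
  group

lemma summable_aux {l : ℕ} (lam : ℝ) (h0 : 0 ≤ lam) (h1 : lam < 1)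
    (M : ℕ → UG l) (g : ℕ → EuclideanSpace ℝ (Fin l)) (C : ℝ) (hg : ∀ j, ‖g j‖ ≤ C) :
    Summable (fun j : ℕ => lam ^ j • act (M j) (g j)) := by
  apply Summable.of_norm_bounded (g := fun j : ℕ => C * lam ^ j)
  · exact (summable_geometric_of_lt_one h0 h1).mul_left C
  · intro j
    rw [norm_smul, act_norm]
    have : ‖lam ^ j‖ = lam ^ j := by
      rw [Real.norm_eq_abs, abs_of_nonneg (pow_nonneg h0 j)]
    rw [this, mul_comm]
    exact mul_le_mul_of_nonneg_right (hg j) (pow_nonneg h0 j)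

lemma norm_uLam_le {l : ℕ} {X : Type*} (T : X → X) (Ψ : X → UG l)
    (ρ : X → EuclideanSpace ℝ (Fin l)) (C : ℝ) (hC : 0 ≤ C) (hρ : ∀ y, ‖ρ y‖ ≤ C)
    (lam : ℝ) (h0 : 0 ≤ lam) (h1 : lam < 1) (x : X) :
    ‖uLam T Ψ ρ lam x‖ ≤ C * (1 - lam)⁻¹ := by
  rw [uLam, norm_neg]
  have hbound : ∀ j : ℕ, ‖lam ^ j • act (invProd T Ψ x j) (ρ (T^[j] x))‖ ≤ C * lam ^ j := by
    intro j
    rw [norm_smul, act_norm, Real.norm_eq_abs, abs_of_nonneg (pow_nonneg h0 j), mul_comm]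
    exact mul_le_mul_of_nonneg_right (hρ _) (pow_nonneg h0 j)
  have hgeom : Summable (fun j : ℕ => C * lam ^ j) :=
    (summable_geometric_of_lt_one h0 h1).mul_left C
  have hnorm : Summable (fun j : ℕ => ‖lam ^ j • act (invProd T Ψ x j) (ρ (T^[j] x))‖) :=
    Summable.of_nonneg_of_le (fun j => norm_nonneg _) hbound hgeom
  calc ‖∑' j : ℕ, lam ^ j • act (invProd T Ψ x j) (ρ (T^[j] x))‖
      ≤ ∑' j : ℕ, ‖lam ^ j • act (invProd T Ψ x j) (ρ (T^[j] x))‖ :=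
        norm_tsum_le_tsum_norm hnorm
    _ ≤ ∑' j : ℕ, C * lam ^ j := Summable.tsum_le_tsum hbound hnorm hgeom
    _ = C * (1 - lam)⁻¹ := by
        rw [tsum_mul_left, tsum_geometric_of_lt_one h0 h1]

/-- The key algebraic identity (part 1). -/
lemma key_identity {l : ℕ} {X : Type*} (T : X → X) (Ψ : X → UG l)
    (ρ : X → EuclideanSpace ℝ (Fin l))
    (u : X → EuclideanSpace ℝ (Fin l)) (C : ℝ) (hu : ∀ x, ‖u x‖ ≤ C)
    (heq : ∀ x, u (T x) - act (Ψ x) (u x) = ρ x)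
    (lam : ℝ) (h0 : 0 ≤ lam) (h1 : lam < 1) (x : X) :
    uLam T Ψ ρ lam x = u x - Sop T Ψ lam u x := by
  set b : ℕ → EuclideanSpace ℝ (Fin l) :=
    fun j => lam ^ j • act (invProd T Ψ x j) (u (T^[j+1] x)) with hb_def
  set a : ℕ → EuclideanSpace ℝ (Fin l) :=
    fun j => lam ^ j • act (invProd T Ψ x j * Ψ (T^[j] x)) (u (T^[j] x)) with ha_def
  have hb : Summable b :=
    summable_aux lam h0 h1 _ _ C (fun j => hu _)
  have ha : Summable a :=
    summable_aux lam h0 h1 _ _ C (fun j => hu _)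
  have hterm : ∀ j : ℕ, lam ^ j • act (invProd T Ψ x j) (ρ (T^[j] x)) = b j - a j := by
    intro j
    have hval : ρ (T^[j] x) = u (T^[j+1] x) - act (Ψ (T^[j] x)) (u (T^[j] x)) := by
      rw [Function.iterate_succ_apply']
      exact (heq (T^[j] x)).symm
    rw [hval, act_sub, smul_sub, ha_def, hb_def]
    simp only [act_mul]
  have ha0 : a 0 = u x := by
    simp [ha_def, invProd_zero_mul, act_one]
  have haS : ∀ j : ℕ, a (j + 1) = lam • b j := by
    intro j
    simp only [ha_def, hb_def, invProd_mul_Psi, pow_succ, smul_smul, mul_comm]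
  have hSa : ∑' j, a j = u x + lam • ∑' j, b j := by
    rw [Summable.tsum_eq_zero_add ha, ha0]
    congr 1
    simp only [haS]
    exact Summable.tsum_const_smul lam hb
  have : uLam T Ψ ρ lam x = (∑' j, a j) - ∑' j, b j := by
    rw [uLam]
    have : ∑' j : ℕ, lam ^ j • act (invProd T Ψ x j) (ρ (T^[j] x)) = ∑' j, (b j - a j) := by
      exact tsum_congr hterm
    rw [this, Summable.tsum_sub hb ha]
    abel
  rw [this, hSa, Sop]
  have : Sop T Ψ lam u x = (1 - lam) • ∑' j, b j := rfl
  rw [sub_smul, one_smul]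
  abel

/-- The functional equation satisfied by `uLam`. -/
lemma uLam_feq {l : ℕ} {X : Type*} [MetricSpace X] [CompactSpace X]
    (T : X ≃ₜ X) (Ψ : X → UG l)
    (ρ : X → EuclideanSpace ℝ (Fin l)) (C : ℝ) (hC : ∀ y, ‖ρ y‖ ≤ C)
    (lam : ℝ) (h0 : 0 ≤ lam) (h1 : lam < 1) (x : X) :
    lam • uLam T Ψ ρ lam (T x) - act (Ψ x) (uLam T Ψ ρ lam x) = ρ x := by
  have hsum : Summable (fun j : ℕ => lam ^ j • act (invProd T Ψ x j) (ρ (T^[j] x))) :=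
    summable_aux lam h0 h1 _ _ C (fun j => hC _)
  have hmap : act (Ψ x) (∑' j : ℕ, lam ^ j • act (invProd T Ψ x j) (ρ (T^[j] x)))
      = ∑' j : ℕ, lam ^ j • act (Ψ x * invProd T Ψ x j) (ρ (T^[j] x)) := by
    rw [← actCLM_eq]
    rw [ContinuousLinearMap.map_tsum _ hsum]
    congr 1
    funext j
    rw [actCLM_eq, act_smul, ← act_mul]
  have hsum2 : Summable (fun j : ℕ => lam ^ j • act (Ψ x * invProd T Ψ x j) (ρ (T^[j] x))) :=
    summable_aux lam h0 h1 _ _ C (fun j => hC _)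
  have hsplit : ∑' j : ℕ, lam ^ j • act (Ψ x * invProd T Ψ x j) (ρ (T^[j] x))
      = ρ x + lam • ∑' j : ℕ, lam ^ j • act (invProd T Ψ (T x) j) (ρ (T^[j] (T x))) := by
    rw [Summable.tsum_eq_zero_add hsum2]
    congr 1
    · have : Ψ x * invProd T Ψ x 0 = 1 := by rw [invProd_zero]; group
      simp [this, act_one]
    · rw [← Summable.tsum_const_smul lam (summable_aux lam h0 h1
        (fun j => invProd T Ψ (T x) j) (fun j => ρ (T^[j] (T x))) C (fun j => hC _))]
      apply tsum_congr
      intro j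
      rw [Psi_mul_invProd, smul_smul, pow_succ']
      simp only [Function.iterate_succ_apply]
  simp only [uLam]
  rw [act_neg, hmap, hsplit, smul_neg]
  abel

theorem stmt17 {l : ℕ} {X : Type*} [MetricSpace X] [CompactSpace X]
    (T : X ≃ₜ X) (Ψ : X → UG l) (hΨ : Continuous Ψ)
    (ρ : X → EuclideanSpace ℝ (Fin l)) (hρ : Continuous ρ) :
    (∀ u : X → EuclideanSpace ℝ (Fin l), (∃ C, ∀ x, ‖u x‖ ≤ C) →
      (∀ x, u (T x) - act (Ψ x) (u x) = ρ x) →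
      ∀ lam ∈ Set.Ioo (0 : ℝ) 1, ∀ x,
        uLam T Ψ ρ lam x = u x - Sop T Ψ lam u x) ∧
    ((∃ u : X → EuclideanSpace ℝ (Fin l),
        TendstoUniformly (fun lam x => uLam T Ψ ρ lam x) u (𝓝[<] (1 : ℝ))) ↔
      (∃ u : X → EuclideanSpace ℝ (Fin l), (∃ C, ∀ x, ‖u x‖ ≤ C) ∧
        (∀ x, u (T x) - act (Ψ x) (u x) = ρ x) ∧
        TendstoUniformly (fun lam x => Sop T Ψ lam u x) (fun _ => 0) (𝓝[<] (1 : ℝ)))) ∧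
    (∀ u : X → EuclideanSpace ℝ (Fin l),
      TendstoUniformly (fun lam x => uLam T Ψ ρ lam x) u (𝓝[<] (1 : ℝ)) →
      (∀ x, u (T x) - act (Ψ x) (u x) = ρ x) ∧
      TendstoUniformly (fun lam x => Sop T Ψ lam u x) (fun _ => 0) (𝓝[<] (1 : ℝ))) := by
  -- a bound for ρ
  obtain ⟨Cρ, hCρ0, hCρ⟩ : ∃ C, 0 ≤ C ∧ ∀ y, ‖ρ y‖ ≤ C := by
    rcases isEmpty_or_nonempty X with h | h
    · exact ⟨0, le_refl 0, fun y => h.elim y⟩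
    · obtain ⟨y0, hy0⟩ := (hρ.norm).exists_forall_ge
        (by rw [Filter.cocompact_eq_bot]; exact tendsto_bot)
      exact ⟨‖ρ y0‖, norm_nonneg _, fun y => hy0 y⟩
  have hIoo : Set.Ioo (0 : ℝ) 1 ∈ 𝓝[<] (1 : ℝ) :=
    Ioo_mem_nhdsLT_of_mem (by constructor <;> norm_num)
  have part1 : ∀ u : X → EuclideanSpace ℝ (Fin l), (∃ C, ∀ x, ‖u x‖ ≤ C) →
      (∀ x, u (T x) - act (Ψ x) (u x) = ρ x) →
      ∀ lam ∈ Set.Ioo (0 : ℝ) 1, ∀ x,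
        uLam T Ψ ρ lam x = u x - Sop T Ψ lam u x := by
    rintro u ⟨C, hC⟩ heq lam ⟨hl0, hl1⟩ x
    exact key_identity T Ψ ρ u C hC heq lam hl0.le hl1 x
  have part3 : ∀ u : X → EuclideanSpace ℝ (Fin l),
      TendstoUniformly (fun lam x => uLam T Ψ ρ lam x) u (𝓝[<] (1 : ℝ)) →
      (∃ C, ∀ x, ‖u x‖ ≤ C) ∧
      (∀ x, u (T x) - act (Ψ x) (u x) = ρ x) ∧
      TendstoUniformly (fun lam x => Sop T Ψ lam u x) (fun _ => 0) (𝓝[<] (1 : ℝ)) := by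
    intro u hconv
    -- pointwise limits
    have hpt : ∀ x, Tendsto (fun lam => uLam T Ψ ρ lam x) (𝓝[<] (1 : ℝ)) (𝓝 (u x)) := by
      intro x
      exact hconv.tendsto_at x
    -- the equation
    have heq : ∀ x, u (T x) - act (Ψ x) (u x) = ρ x := by
      intro x
      have hlhs : Tendsto
          (fun lam : ℝ => lam • uLam T Ψ ρ lam (T x) - act (Ψ x) (uLam T Ψ ρ lam x))
          (𝓝[<] (1 : ℝ)) (𝓝 (u (T x) - act (Ψ x) (u x))) := by
        have h1 : Tendsto (fun lam : ℝ => lam • uLam T Ψ ρ lam (T x)) (𝓝[<] (1 : ℝ))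
            (𝓝 (u (T x))) := by
          have := (tendsto_id.mono_left (nhdsWithin_le_nhds : 𝓝[<] (1:ℝ) ≤ 𝓝 1)).smul
            (hpt (T x))
          simpa using this
        have h2 : Tendsto (fun lam : ℝ => act (Ψ x) (uLam T Ψ ρ lam x)) (𝓝[<] (1 : ℝ))
            (𝓝 (act (Ψ x) (u x))) := by
          simp only [← actCLM_eq]
          exact ((actCLM (Ψ x)).continuous.tendsto _).comp (hpt x)
        exact h1.sub h2
      have hev : ∀ᶠ lam in 𝓝[<] (1 : ℝ),
          (fun lam : ℝ => lam • uLam T Ψ ρ lam (T x) - act (Ψ x) (uLam T Ψ ρ lam x)) lam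
            = ρ x := by
        filter_upwards [hIoo] with lam hlam
        exact uLam_feq T Ψ ρ Cρ hCρ lam hlam.1.le hlam.2 x
      have : Tendsto (fun _ : ℝ => ρ x) (𝓝[<] (1 : ℝ)) (𝓝 (u (T x) - act (Ψ x) (u x))) :=
        hlhs.congr' hev
      exact tendsto_nhds_unique this tendsto_const_nhds
    -- boundedness of u
    have hbdd : ∃ C, ∀ x, ‖u x‖ ≤ C := by
      have := (Metric.tendstoUniformly_iff.mp hconv 1 one_pos).and hIoo
      obtain ⟨lam0, hd, hlam0⟩ := this.exists
      refine ⟨Cρ * (1 - lam0)⁻¹ + 1, fun x => ?_⟩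
      have h1 : ‖uLam T Ψ ρ lam0 x‖ ≤ Cρ * (1 - lam0)⁻¹ :=
        norm_uLam_le T Ψ ρ Cρ hCρ0 hCρ lam0 hlam0.1.le hlam0.2 x
      have h2 : ‖u x - uLam T Ψ ρ lam0 x‖ < 1 := by
        have := hd x
        rwa [dist_eq_norm] at this
      have h3 := norm_sub_norm_le (u x) (uLam T Ψ ρ lam0 x)
      linarith
    refine ⟨hbdd, heq, ?_⟩
    rw [Metric.tendstoUniformly_iff]
    intro ε hε
    filter_upwards [Metric.tendstoUniformly_iff.mp hconv ε hε, hIoo] with lam h1 h2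
    intro x
    have h3 : Sop T Ψ lam u x = u x - uLam T Ψ ρ lam x := by
      rw [part1 u hbdd heq lam h2 x]; abel
    have h4 := h1 x
    rw [dist_eq_norm] at h4 ⊢
    rw [h3]
    simpa [norm_sub_rev] using h4
  refine ⟨part1, ?_, fun u h => ((part3 u h).2)⟩
  constructor
  · rintro ⟨u, hconv⟩
    obtain ⟨hb, heq, hS⟩ := part3 u hconv
    exact ⟨u, hb, heq, hS⟩
  · rintro ⟨u, hb, heq, hS⟩
    refine ⟨u, ?_⟩
    rw [Metric.tendstoUniformly_iff]
    intro ε hε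
    filter_upwards [Metric.tendstoUniformly_iff.mp hS ε hε, hIoo] with lam h1 h2
    intro x
    have h3 := part1 u hb heq lam h2 x
    have h4 := h1 x
    rw [dist_eq_norm] at h4 ⊢
    rw [h3]
    simpa using h4
end
end
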